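/- arXiv:2508.15296 — 2 statements merged into one kernel-verified Lean document; each statement's English description precedes it below -/
import Mathlib

section
/- Fix a finite set I of students, a finite set S of schools, schools' preferences, quotas, and a student acquaintance graph G of treewidth at most k. Then there exists a mechanism (a function assigning a feasible matching to every profile of students' strict linear orders on S ∪ {∅}) that is strategyproof and whose output matching is Pareto efficient and locally EF-k for every profile of students' preferences. -/
section Defs

variable {I S : Type*}

/-- Students' preference profiles: `pI i a b` means student `i` strictly prefers option `a`
to option `b`, where `none` represents being unmatched. -/
abbrev StudentPrefs (I S : Type*) := I → Option S → Option S → Prop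

/-- Schools' preference profiles: `pS s a b` means school `s` strictly prefers `a` to `b`,
where `none` represents leaving a seat vacant. -/
abbrev SchoolPrefs (I S : Type*) := S → Option I → Option I → Prop

/-- Each student's preference is a strict linear order on `S ∪ {∅}`. -/
def ValidStudentPrefs (pI : StudentPrefs I S) : Prop :=
  ∀ i, IsStrictTotalOrder (Option S) (pI i)

/-- Each school's preference is a strict linear order on `I ∪ {∅}`. -/
def ValidSchoolPrefs (pS : SchoolPrefs I S) : Prop :=
  ∀ s, IsStrictTotalOrder (Option I) (pS s)

/-- A matching `μ : I → Option S` is feasible if each school's quota is respected. -/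
def Feasible (q : S → ℕ) (μ : I → Option S) : Prop :=
  ∀ s : S, {i | μ i = some s}.ncard ≤ q s

/-- Student `i` has justified envy toward student `i'` in matching `μ`. -/
def JEnvy (pI : StudentPrefs I S) (pS : SchoolPrefs I S)
    (μ : I → Option S) (i i' : I) : Prop :=
  ∃ s : S, μ i' = some s ∧ pI i (some s) (μ i) ∧ pS s (some i) (some i')

/-- Local envy: justified envy toward a neighbor in the student acquaintance graph `G`. -/
def LocalEnvy (G : SimpleGraph I) (pI : StudentPrefs I S) (pS : SchoolPrefs I S)
    (μ : I → Option S) (i i' : I) : Prop :=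
  JEnvy pI pS μ i i' ∧ G.Adj i i'

/-- Locally envy-free matching. -/
def LEF (G : SimpleGraph I) (pI : StudentPrefs I S) (pS : SchoolPrefs I S)
    (μ : I → Option S) : Prop :=
  ∀ i i', ¬ LocalEnvy G pI pS μ i i'

/-- Fair (justified-envy-free) matching. -/
def Fair (pI : StudentPrefs I S) (pS : SchoolPrefs I S) (μ : I → Option S) : Prop :=
  ∀ i i', ¬ JEnvy pI pS μ i i'

/-- Locally envy-free up to `k` peers: every student has local envy toward at most `k` students. -/
def LocEF (G : SimpleGraph I) (pI : StudentPrefs I S) (pS : SchoolPrefs I S)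
    (k : ℕ) (μ : I → Option S) : Prop :=
  ∀ i, {i' | LocalEnvy G pI pS μ i i'}.ncard ≤ k

/-- Locally envy-receiving-free up to `k` peers: for every student at most `k` students
have local envy toward her. -/
def LocERF (G : SimpleGraph I) (pI : StudentPrefs I S) (pS : SchoolPrefs I S)
    (k : ℕ) (μ : I → Option S) : Prop :=
  ∀ i, {i' | LocalEnvy G pI pS μ i' i}.ncard ≤ k

/-- `μ'` Pareto dominates `μ`. -/
def Dominates (pI : StudentPrefs I S) (μ' μ : I → Option S) : Prop :=
  (∀ i, μ' i = μ i ∨ pI i (μ' i) (μ i)) ∧ (∃ i, pI i (μ' i) (μ i))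

/-- A feasible matching is Pareto efficient if no feasible matching Pareto dominates it. -/
def ParetoEfficient (pI : StudentPrefs I S) (q : S → ℕ) (μ : I → Option S) : Prop :=
  ∀ μ', Feasible q μ' → ¬ Dominates pI μ' μ

/-- `(i, s)` is a mutually-best pair. -/
def MBPair (pI : StudentPrefs I S) (pS : SchoolPrefs I S) (i : I) (s : S) : Prop :=
  (∀ x : Option S, x ≠ some s → pI i (some s) x) ∧
  (∀ y : Option I, y ≠ some i → pS s (some i) y)

/-- A matching is mutually-best if every mutually-best pair is matched. -/
def MutuallyBest (pI : StudentPrefs I S) (pS : SchoolPrefs I S) (μ : I → Option S) : Prop :=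
  ∀ i s, MBPair pI pS i s → μ i = some s

/-- The set of the `m` most-preferred elements under a strict order `r`
(`r j i` meaning `j` is strictly preferred to `i`). -/
def topSet (r : I → I → Prop) (m : ℕ) : Set I := {i | {j | r j i}.ncard < m}

/-- A strict linear order on `I` is single-peaked on the graph `G` if for each
`m ∈ {1, …, |I|}` the set of the `m` most-preferred elements induces a connected
subgraph of `G`. -/
def SinglePeakedOn (G : SimpleGraph I) (r : I → I → Prop) : Prop :=
  ∀ m : ℕ, 1 ≤ m → m ≤ Nat.card I → (G.induce (topSet r m)).Connected

/-- `(T, bag)` is a tree decomposition of `G`. -/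
structure IsTreeDecomp {V : Type*} (G : SimpleGraph I) (T : SimpleGraph V)
    (bag : V → Set I) : Prop where
  tree : T.IsTree
  covers : ∀ i : I, ∃ t, i ∈ bag t
  subtree : ∀ i : I, (T.induce {t | i ∈ bag t}).Connected
  edges : ∀ ⦃i i' : I⦄, G.Adj i i' → ∃ t, i ∈ bag t ∧ i' ∈ bag t

/-- `G` has treewidth at most `k`: it admits a tree decomposition of width at most `k`. -/
def TreewidthAtMost (G : SimpleGraph I) (k : ℕ) : Prop :=
  ∃ (V : Type) (T : SimpleGraph V) (bag : V → Set I),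
    Finite V ∧ IsTreeDecomp G T bag ∧ ∀ t, (bag t).ncard ≤ k + 1

/-- `G` is `k`-degenerate: there is a linear ordering of the vertices (an injection
into `ℕ`) such that every vertex has at most `k` neighbors occurring strictly later. -/
def Degenerate (G : SimpleGraph I) (k : ℕ) : Prop :=
  ∃ ord : I → ℕ, Function.Injective ord ∧
    ∀ i, {i' | G.Adj i i' ∧ ord i < ord i'}.ncard ≤ k

/-- The first index `j` in the list `L` of bags such that `i ∈ bag (L.get j)`. -/
noncomputable def firstBagIdx {V : Type*} (L : List V) (bag : V → Set I) (i : I) : ℕ :=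
  sInf {j | ∃ h : j < L.length, i ∈ bag (L.get ⟨j, h⟩)}

/-- A strict linear order on `I` is single-peaked on a tree decomposition `(T, bag)` if
there is a sequence of nodes covering all vertices, each node after the first adjacent in
`T` to an earlier one, such that vertices first covered earlier are preferred. -/
def SinglePeakedOnTD {V : Type*} (T : SimpleGraph V) (bag : V → Set I)
    (r : I → I → Prop) : Prop :=
  ∃ L : List V,
    (∀ i : I, ∃ j : ℕ, ∃ h : j < L.length, i ∈ bag (L.get ⟨j, h⟩)) ∧
    (∀ j : ℕ, ∀ h : j < L.length, 1 ≤ j →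
      ∃ j' : ℕ, ∃ h' : j' < L.length, j' < j ∧ T.Adj (L.get ⟨j', h'⟩) (L.get ⟨j, h⟩)) ∧
    (∀ i i' : I, firstBagIdx L bag i < firstBagIdx L bag i' → r i i')

/-- `(i, s)` is a blocking pair for the feasible matching `μ`. -/
def BlockingPair (pI : StudentPrefs I S) (pS : SchoolPrefs I S) (q : S → ℕ)
    (μ : I → Option S) (i : I) (s : S) : Prop :=
  μ i ≠ some s ∧ pI i (some s) (μ i) ∧
  (({i' | μ i' = some s}.ncard < q s ∧ pS s (some i) none) ∨
   ({i' | μ i' = some s}.ncard = q s ∧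
     ∃ i₀, μ i₀ = some s ∧
       (∀ i₁, μ i₁ = some s → i₁ = i₀ ∨ pS s (some i₁) (some i₀)) ∧
       pS s (some i) (some i₀)))

/-- A matching is locally stable if for every blocking pair `(i, s)`, no neighbor of `i`
is matched to `s`. -/
def LocallyStable (G : SimpleGraph I) (pI : StudentPrefs I S) (pS : SchoolPrefs I S)
    (q : S → ℕ) (μ : I → Option S) : Prop :=
  ∀ i s, BlockingPair pI pS q μ i s → ∀ i', G.Adj i i' → μ i' ≠ some s

/-- Strategyproofness of a mechanism `f` (the schools' side being fixed). -/
def Strategyproof (f : StudentPrefs I S → (I → Option S)) : Prop :=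
  ∀ pI : StudentPrefs I S, ValidStudentPrefs pI → ∀ i : I,
    ∀ pI' : StudentPrefs I S, ValidStudentPrefs pI' →
      (∀ i'' : I, i'' ≠ i → pI' i'' = pI i'') →
      f pI i = f pI' i ∨ pI i (f pI i) (f pI' i)

end Defs

/-!
Serial dictatorship is strategyproof and Pareto efficient for every order of the students, and in
it a student can only envy students who chose before her: whatever a later student got was still
available to her. So it suffices to order the students so that each has at most `k` neighbours
choosing before her, i.e. to show that graphs of treewidth at most `k` are `k`-degenerate. Root a
tree decomposition and rank each student by the depth of the highest bag containing her. If `j` is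
a neighbour of `i` ranked no lower than `i`, the bag subtrees of `i` and `j` meet, and climbing
from a common node towards the root stays inside both subtrees until the top of `i`'s subtree is
reached; hence that top bag contains `j`, and it has at most `k` elements besides `i`.
-/

namespace SimpleGraph

variable {V : Type*} {T : SimpleGraph V}

theorem exists_isPath_support_subset_of_connected_induce {W : Set V}
    (hW : (T.induce W).Connected) {a b : V} (ha : a ∈ W) (hb : b ∈ W) :
    ∃ p : T.Walk a b, p.IsPath ∧ ∀ y ∈ p.support, y ∈ W := by
  classical
  obtain ⟨w⟩ := hW.preconnected ⟨a, ha⟩ ⟨b, hb⟩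
  have hw : ∀ y ∈ (w.map (Embedding.induce W).toHom).support, y ∈ W := by
    simp only [Walk.support_map, List.mem_map]
    rintro _ ⟨z, -, rfl⟩
    exact z.2
  exact ⟨_, Walk.bypass_isPath _, fun y hy => hw y (Walk.support_bypass_subset_support _ hy)⟩

namespace IsTree

theorem eq_of_adj_of_dist_add_one_eq (hT : T.IsTree) (r : V) {u v x : V} (hu : T.Adj u x)
    (hv : T.Adj v x) (du : T.dist r u + 1 = T.dist r x) (dv : T.dist r v + 1 = T.dist r x) :
    u = v := by
  obtain ⟨p, hp⟩ := hT.connected.exists_walk_length_eq_dist r u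
  obtain ⟨p', hp'⟩ := hT.connected.exists_walk_length_eq_dist r v
  have hpaths := (hT.isAcyclic.subsingleton_path r x).elim
    ⟨p.concat hu, (p.concat hu).isPath_of_length_eq_dist (by simp [hp, du])⟩
    ⟨p'.concat hv, (p'.concat hv).isPath_of_length_eq_dist (by simp [hp', dv])⟩
  simpa using congrArg (fun q : T.Path r x => (q : T.Walk r x).penultimate) hpaths

/-- Once a path moves away from the root it never comes back: a vertex with two neighbours closer
to the root would close a cycle. -/
theorem dist_lt_of_isPath_cons (hT : T.IsTree) (r : V) {x y b : V} (h : T.Adj x y)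
    (hy : T.dist r y = T.dist r x + 1) (p : T.Walk y b) (hp : (Walk.cons h p).IsPath) :
    T.dist r x < T.dist r b := by
  induction p generalizing x with
  | nil => omega
  | @cons y z b h' p ih =>
    rw [Walk.cons_isPath_iff] at hp
    rcases hT.dist_eq_dist_add_one_of_adj r h' with hz | hz
    · have hxz : x ≠ z := fun hxz => hp.2 (by simp [hxz])
      exact absurd (hT.eq_of_adj_of_dist_add_one_eq r h h'.symm hy.symm hz.symm) hxz
    · have := ih h' hz hp.1
      omega

theorem exists_adj_dist_add_one_eq_of_connected_induce (hT : T.IsTree) (r : V) {W : Set V}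
    (hW : (T.induce W).Connected) {m x : V} (hm : m ∈ W)
    (hmin : ∀ t ∈ W, T.dist r m ≤ T.dist r t) (hx : x ∈ W)
    (hxm : x ≠ m) : ∃ y ∈ W, T.Adj y x ∧ T.dist r y + 1 = T.dist r x := by
  obtain ⟨p, hp, hpW⟩ := exists_isPath_support_subset_of_connected_induce hW hx hm
  cases p with
  | nil => exact absurd rfl hxm
  | @cons _ y _ h p =>
    have hyW : y ∈ W := hpW y (by simp)
    rcases hT.dist_eq_dist_add_one_of_adj r h with hxy | hyx
    · exact ⟨y, hyW, h.symm, hxy.symm⟩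
    · have := hT.dist_lt_of_isPath_cons r h hyx p hp
      have := hmin x hx
      omega

theorem mem_of_connected_induce_of_dist_le (hT : T.IsTree) (r : V) {W W' : Set V}
    (hW : (T.induce W).Connected) (hW' : (T.induce W').Connected) {m m' t : V} (hm : m ∈ W)
    (hmin : ∀ t ∈ W, T.dist r m ≤ T.dist r t) (hm' : m' ∈ W')
    (hmin' : ∀ t ∈ W', T.dist r m' ≤ T.dist r t) (ht : t ∈ W) (ht' : t ∈ W')
    (hle : T.dist r m' ≤ T.dist r m) : m ∈ W' := by
  induction hn : T.dist r t using Nat.strong_induction_on generalizing t with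
  | _ n ih =>
    by_cases htm : t = m
    · exact htm ▸ ht'
    obtain ⟨y, hyW, hyt, hy⟩ :=
      hT.exists_adj_dist_add_one_eq_of_connected_induce r hW hm hmin ht htm
    have htm' : t ≠ m' := by
      rintro rfl
      have := hmin y hyW
      omega
    obtain ⟨y', hyW', hyt', hy'⟩ :=
      hT.exists_adj_dist_add_one_eq_of_connected_induce r hW' hm' hmin' ht' htm'
    obtain rfl := hT.eq_of_adj_of_dist_add_one_eq r hyt hyt' hy hy'
    exact ih _ (by omega) hyW hyW' rfl

end IsTree

end SimpleGraph

section Degeneracy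

variable {I : Type*}

theorem degenerate_of_ncard_adj_rank_le [Fintype I] {G : SimpleGraph I} {k : ℕ} (rank : I → ℕ)
    (hrank : ∀ i, {j | G.Adj i j ∧ rank j ≤ rank i}.ncard ≤ k) : Degenerate G k := by
  let e := Fintype.equivFin I
  let D := ∑ i, rank i
  have hD : ∀ i, rank i ≤ D := fun i =>
    Finset.single_le_sum (fun _ _ => Nat.zero_le _) (Finset.mem_univ i)
  -- decreasing in `rank`, with ties broken by `e`
  let ord : I → ℕ := fun i => Fintype.card I * (D - rank i) + e i
  have hpos : ∀ i : I, 0 < Fintype.card I := fun i => Fintype.card_pos_iff.2 ⟨i⟩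
  have hdiv : ∀ i, ord i / Fintype.card I = D - rank i := fun i => by
    rw [Nat.mul_add_div (hpos i), Nat.div_eq_of_lt (e i).2, add_zero]
  have hmod : ∀ i, ord i % Fintype.card I = e i := fun i => by
    rw [Nat.mul_add_mod, Nat.mod_eq_of_lt (e i).2]
  refine ⟨ord, fun a b h => e.injective (Fin.ext (by rw [← hmod a, ← hmod b, h])),
    fun i => ?_⟩
  refine le_trans (Set.ncard_le_ncard ?_ (Set.toFinite _)) (hrank i)
  rintro j ⟨hij, hlt⟩
  have := Nat.div_le_div_right (c := Fintype.card I) hlt.le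
  rw [hdiv, hdiv] at this
  exact ⟨hij, by have := hD i; have := hD j; omega⟩

theorem TreewidthAtMost.degenerate [Fintype I] {G : SimpleGraph I} {k : ℕ}
    (hG : TreewidthAtMost G k) : Degenerate G k := by
  obtain ⟨V, T, bag, hV, hdec, hwidth⟩ := hG
  obtain ⟨r⟩ := hdec.tree.connected.nonempty
  have hexists_top (i : I) : ∃ t ∈ {t | i ∈ bag t}, ∀ t' ∈ {t | i ∈ bag t},
      T.dist r t ≤ T.dist r t' :=
    Set.exists_min_image _ _ (Set.toFinite _) (hdec.covers i)
  choose top htop hmin using hexists_top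
  refine degenerate_of_ncard_adj_rank_le (fun i => T.dist r (top i)) fun i => ?_
  have hsub : {j | G.Adj i j ∧ T.dist r (top j) ≤ T.dist r (top i)} ⊆ bag (top i) \ {i} := by
    rintro j ⟨hij, hle⟩
    obtain ⟨t, hti, htj⟩ := hdec.edges hij
    exact ⟨hdec.tree.mem_of_connected_induce_of_dist_le r (hdec.subtree i) (hdec.subtree j)
      (htop i) (hmin i) (htop j) (hmin j) hti htj hle, hij.ne'⟩
  have hi : i ∈ bag (top i) := htop i
  have := Set.ncard_sdiff_singleton_add_one hi (Set.toFinite _)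
  have := Set.ncard_le_ncard hsub (Set.toFinite _)
  have := hwidth (top i)
  omega

theorem exists_list_pairwise_lt [Fintype I] (ord : I → ℕ) (hord : Function.Injective ord) :
    ∃ L : List I, (∀ i, i ∈ L) ∧ L.Pairwise fun a b => ord a < ord b := by
  let : LinearOrder I := LinearOrder.lift' ord hord
  exact ⟨Finset.univ.sort, fun i => (Finset.mem_sort _).2 (Finset.mem_univ i),
    ((Finset.pairwise_sort _ _).and (Finset.sort_nodup _ _)).imp fun {a b} h =>
      show a < b from lt_of_le_of_ne h.1 h.2⟩

end Degeneracy

section SerialDictatorship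

variable {I S : Type*}

noncomputable def favorite (r : Option S → Option S → Prop) (A : Set (Option S)) : Option S :=
  Classical.epsilon fun b => b ∈ A ∧ ∀ x ∈ A, ¬ r x b

theorem favorite_spec [Finite S] {r : Option S → Option S → Prop}
    (hr : IsStrictTotalOrder (Option S) r) {A : Set (Option S)} (hA : A.Nonempty) :
    favorite r A ∈ A ∧ ∀ x ∈ A, ¬ r x (favorite r A) :=
  have := hr
  Classical.epsilon_spec ((Finite.wellFounded_of_trans_of_irrefl r).has_min A hA)

theorem favorite_eq_or_rel [Finite S] {r : Option S → Option S → Prop}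
    (hr : IsStrictTotalOrder (Option S) r) {A : Set (Option S)} {x : Option S} (hx : x ∈ A) :
    favorite r A = x ∨ r (favorite r A) x := by
  have := hr
  rcases trichotomous_of r (favorite r A) x with h | h | h
  · exact Or.inr h
  · exact Or.inl h
  · exact absurd h ((favorite_spec hr ⟨x, hx⟩).2 x hx)

def Available (q : S → ℕ) (μ : I → Option S) : Set (Option S) :=
  {o | ∀ s, o = some s → {i | μ i = some s}.ncard < q s}

theorem none_mem_available (q : S → ℕ) (μ : I → Option S) : none ∈ Available q μ := by
  simp [Available]

theorem Feasible.update [DecidableEq I] [Finite I] {q : S → ℕ} {μ : I → Option S}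
    (hμ : Feasible q μ) {o : Option S} (ho : o ∈ Available q μ) (i : I) :
    Feasible q (Function.update μ i o) := by
  intro s
  by_cases hos : o = some s
  · have hsub : {j | Function.update μ i o j = some s} ⊆ insert i {j | μ j = some s} := by
      intro j hj
      by_cases hji : j = i
      · exact Or.inl hji
      · exact Or.inr (by simpa [Function.update_of_ne hji] using hj)
    calc _ ≤ (insert i {j | μ j = some s}).ncard := Set.ncard_le_ncard hsub (Set.toFinite _)
      _ ≤ {j | μ j = some s}.ncard + 1 := Set.ncard_insert_le _ _
      _ ≤ q s := ho s hos
  · refine le_trans (Set.ncard_le_ncard ?_ (Set.toFinite _)) (hμ s)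
    intro j hj
    by_cases hji : j = i
    · subst hji
      exact absurd (by simpa using hj) hos
    · simpa [Function.update_of_ne hji] using hj

theorem mem_available_of_extends [Finite I] {q : S → ℕ} {μ ν : I → Option S}
    (hμ : Feasible q μ) (hνμ : ∀ j s, ν j = some s → μ j = some s) {i : I}
    (hi : ν i = none) :
    μ i ∈ Available q ν := by
  intro s hs
  have hsub : insert i {j | ν j = some s} ⊆ {j | μ j = some s} := by
    rintro j (rfl | hj)
    exacts [hs, hνμ j s hj]
  have hi' : i ∉ {j | ν j = some s} := by simp [hi]
  have := Set.ncard_le_ncard hsub (Set.toFinite _)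
  rw [Set.ncard_insert_of_notMem hi' (Set.toFinite _)] at this
  exact lt_of_lt_of_le (Nat.lt_succ_self _) (this.trans (hμ s))

variable [DecidableEq I] (q : S → ℕ)

/-- The head of the list chooses last. -/
noncomputable def serialDictatorship (pI : StudentPrefs I S) : List I → I → Option S
  | [] => fun _ => none
  | i :: L => Function.update (serialDictatorship pI L) i
      (favorite (pI i) (Available q (serialDictatorship pI L)))

variable {q} {pI : StudentPrefs I S}

theorem serialDictatorship_of_notMem {L : List I} {i : I} (hi : i ∉ L) :
    serialDictatorship q pI L i = none := by
  induction L with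
  | nil => rfl
  | cons j L ih =>
    rw [List.mem_cons, not_or] at hi
    rw [serialDictatorship, Function.update_of_ne hi.1, ih hi.2]

theorem mem_of_serialDictatorship_eq_some {L : List I} {i : I} {s : S}
    (h : serialDictatorship q pI L i = some s) : i ∈ L := by
  by_contra hi
  simp [serialDictatorship_of_notMem hi] at h

theorem serialDictatorship_append_of_notMem (A B : List I) {i : I} (hi : i ∉ A) :
    serialDictatorship q pI (A ++ B) i = serialDictatorship q pI B i := by
  induction A with
  | nil => rfl
  | cons j A ih =>
    rw [List.mem_cons, not_or] at hi
    rw [List.cons_append, serialDictatorship, Function.update_of_ne hi.1, ih hi.2]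

theorem serialDictatorship_append_cons_self (A B : List I) {i : I} (hi : i ∉ A) :
    serialDictatorship q pI (A ++ i :: B) i =
      favorite (pI i) (Available q (serialDictatorship q pI B)) := by
  rw [serialDictatorship_append_of_notMem A _ hi, serialDictatorship, Function.update_self]

theorem serialDictatorship_append_of_eq_some {A B : List I} (hAB : (A ++ B).Nodup) {i : I}
    {s : S} (h : serialDictatorship q pI B i = some s) :
    serialDictatorship q pI (A ++ B) i = some s := by
  have hiA : i ∉ A := fun hiA =>
    List.disjoint_of_nodup_append hAB hiA (mem_of_serialDictatorship_eq_some h)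
  rw [serialDictatorship_append_of_notMem A B hiA, h]

theorem serialDictatorship_congr {pI' : StudentPrefs I S} {L : List I}
    (h : ∀ j ∈ L, pI j = pI' j) : serialDictatorship q pI L = serialDictatorship q pI' L := by
  induction L with
  | nil => rfl
  | cons i L ih =>
    rw [serialDictatorship, serialDictatorship, h i List.mem_cons_self,
      ih fun j hj => h j (List.mem_cons_of_mem i hj)]

variable [Finite S]

theorem strategyproof_serialDictatorship {L : List I} (hnd : L.Nodup) :
    Strategyproof fun pI => serialDictatorship q pI L := by
  intro pI hpI i pI' hpI' hother
  by_cases hi : i ∈ L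
  · obtain ⟨A, B, rfl⟩ := List.append_of_mem hi
    have hiAB := (List.nodup_cons.1 (List.nodup_middle.1 hnd)).1
    have hB : serialDictatorship q pI' B = serialDictatorship q pI B :=
      serialDictatorship_congr fun j hj =>
        hother j fun h => hiAB (List.mem_append_right A (h ▸ hj))
    simp only [serialDictatorship_append_cons_self A B fun h => hiAB (List.mem_append_left B h),
      hB]
    exact favorite_eq_or_rel (hpI i) (favorite_spec (hpI' i) ⟨none, none_mem_available q _⟩).1
  · simp [serialDictatorship_of_notMem hi]

variable [Finite I]

theorem feasible_serialDictatorship (hpI : ValidStudentPrefs pI) (L : List I) :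
    Feasible q (serialDictatorship q pI L) := by
  induction L with
  | nil => simp [Feasible, serialDictatorship]
  | cons i L ih =>
    exact ih.update (favorite_spec (hpI i) ⟨none, none_mem_available q _⟩).1 i

theorem rel_of_serialDictatorship_eq_some {R : I → I → Prop} {L : List I}
    (hpI : ValidStudentPrefs pI) (hnd : L.Nodup) (hR : L.Pairwise R) {i i' : I} (hi : i ∈ L)
    {s : S}
    (hs : serialDictatorship q pI L i' = some s)
    (hpref : pI i (some s) (serialDictatorship q pI L i)) : R i i' := by
  obtain ⟨A, B, rfl⟩ := List.append_of_mem hi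
  have hiA : i ∉ A := fun h =>
    (List.nodup_cons.1 (List.nodup_middle.1 hnd)).1 (List.mem_append_left B h)
  rw [serialDictatorship_append_cons_self A B hiA] at hpref
  have hsB : some s ∉ Available q (serialDictatorship q pI B) := fun hsB => by
    have := hpI i
    rcases favorite_eq_or_rel (hpI i) hsB with h | h
    · exact irrefl_of (pI i) _ (h ▸ hpref)
    · exact asymm_of (pI i) h hpref
  have hi'B : i' ∈ B := by
    by_contra hi'B
    refine hsB (hs ▸ mem_available_of_extends (feasible_serialDictatorship hpI _)
      (fun j s h => ?_) (serialDictatorship_of_notMem hi'B))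
    exact List.append_cons A i B ▸ serialDictatorship_append_of_eq_some (by simpa using hnd) h
  exact List.rel_of_pairwise_cons (List.pairwise_append.1 hR).2.1 hi'B

theorem eq_serialDictatorship_of_forall_mem {L : List I} (hpI : ValidStudentPrefs pI)
    (hnd : L.Nodup) {μ : I → Option S} (hμ : Feasible q μ)
    (hweak : ∀ j ∈ L, μ j = serialDictatorship q pI L j ∨
      pI j (μ j) (serialDictatorship q pI L j)) :
    ∀ j ∈ L, μ j = serialDictatorship q pI L j := by
  induction L with
  | nil => simp
  | cons i B ih =>
    obtain ⟨hiB, hnd⟩ := List.nodup_cons.1 hnd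
    have hne {j : I} (hj : j ∈ B) : j ≠ i := fun h => hiB (h ▸ hj)
    have hB : ∀ j ∈ B, μ j = serialDictatorship q pI B j := ih hnd fun j hj => by
      simpa only [serialDictatorship, Function.update_of_ne (hne hj)] using
        hweak j (List.mem_cons_of_mem i hj)
    have hav : μ i ∈ Available q (serialDictatorship q pI B) :=
      mem_available_of_extends hμ
        (fun j s h => (hB j (mem_of_serialDictatorship_eq_some h)).trans h)
        (serialDictatorship_of_notMem hiB)
    intro j hj
    rcases List.mem_cons.1 hj with rfl | hj
    · have := hpI j
      rcases hweak j List.mem_cons_self with h | h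
      · exact h
      simp only [serialDictatorship, Function.update_self] at h ⊢
      rcases favorite_eq_or_rel (hpI j) hav with h' | h'
      · exact h'.symm
      · exact absurd h (asymm_of (pI j) h')
    · rw [serialDictatorship, Function.update_of_ne (hne hj)]
      exact hB j hj

theorem paretoEfficient_serialDictatorship {L : List I} (hpI : ValidStudentPrefs pI)
    (hnd : L.Nodup) (hL : ∀ i, i ∈ L) : ParetoEfficient pI q (serialDictatorship q pI L) := by
  rintro μ hμ ⟨hweak, i, hi⟩
  have := hpI i
  rw [eq_serialDictatorship_of_forall_mem hpI hnd hμ (fun j _ => hweak j) i (hL i)] at hi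
  exact irrefl_of (pI i) _ hi

theorem locEF_serialDictatorship {G : SimpleGraph I} (pS : SchoolPrefs I S) {k : ℕ}
    {ord : I → ℕ} (hk : ∀ i, {j | G.Adj i j ∧ ord i < ord j}.ncard ≤ k) {L : List I}
    (hL : ∀ i, i ∈ L) (hsorted : L.Pairwise fun a b => ord a < ord b)
    (hpI : ValidStudentPrefs pI) : LocEF G pI pS k (serialDictatorship q pI L) := by
  intro i
  refine le_trans (Set.ncard_le_ncard ?_ (Set.toFinite _)) (hk i)
  rintro j ⟨⟨s, hs, hpref, -⟩, hij⟩
  exact ⟨hij, rel_of_serialDictatorship_eq_some hpI (hsorted.imp (ne_of_apply_ne ord ·.ne))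
    hsorted (hL i) hs hpref⟩

end SerialDictatorship

theorem sp_pe_locef_mechanism_treewidth_general {I S : Type*} [Fintype I] [Fintype S]
    (k : ℕ) (G : SimpleGraph I) (hG : TreewidthAtMost G k)
    (pS : SchoolPrefs I S) (q : S → ℕ) :
    ∃ f : StudentPrefs I S → (I → Option S),
      (∀ pI, ValidStudentPrefs pI → Feasible q (f pI)) ∧
      Strategyproof f ∧
      ∀ pI, ValidStudentPrefs pI →
        ParetoEfficient pI q (f pI) ∧ LocEF G pI pS k (f pI) := by
  classical
  obtain ⟨ord, hord, hk⟩ := hG.degenerate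
  obtain ⟨L, hL, hsorted⟩ := exists_list_pairwise_lt ord hord
  have hnd : L.Nodup := hsorted.imp (ne_of_apply_ne ord ·.ne)
  refine ⟨fun pI => serialDictatorship q pI L, fun pI hpI => feasible_serialDictatorship hpI L,
    strategyproof_serialDictatorship hnd, fun pI hpI =>
      ⟨paretoEfficient_serialDictatorship hpI hnd hL,
        locEF_serialDictatorship pS hk hL hsorted hpI⟩⟩

/-- for any fixed schools' preferences, quotas, and acquaintance graph of
treewidth at most `k`, there exists a strategyproof mechanism whose output matching is
always feasible, Pareto efficient, and locally EF-k. -/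
theorem sp_pe_locef_mechanism_treewidth {I S : Type*} [Fintype I] [Fintype S] [Nonempty I]
    (k : ℕ) (G : SimpleGraph I) (hG : TreewidthAtMost G k)
    (pS : SchoolPrefs I S) (q : S → ℕ) (hpS : ValidSchoolPrefs pS) :
    ∃ f : StudentPrefs I S → (I → Option S),
      (∀ pI, ValidStudentPrefs pI → Feasible q (f pI)) ∧
      Strategyproof f ∧
      ∀ pI, ValidStudentPrefs pI →
        ParetoEfficient pI q (f pI) ∧ LocEF G pI pS k (f pI) :=
  sp_pe_locef_mechanism_treewidth_general k G hG pS q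
end

section
/- Fix a finite set I of students, a finite set S of schools, schools' preferences, quotas, and a k-degenerate student acquaintance graph G. Then there exists a mechanism (a function assigning a feasible matching to every profile of students' strict linear orders on S ∪ {∅}) that is strategyproof and whose output matching is Pareto efficient and locally ERF-k for every profile of students' preferences. -/
section SD
open Classical in
theorem exists_top {α : Type*} (r : α → α → Prop) [IsTrichotomous α r] [IsTrans α r]
    (A : Finset α) (hA : A.Nonempty) : ∃ m ∈ A, ∀ x ∈ A, x ≠ m → r m x := by
  induction hA using Finset.Nonempty.cons_induction with
  | singleton a => exact ⟨a, by simp, by simp +contextual⟩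
  | cons a A ha hA ih =>
    obtain ⟨m, hm, hmax⟩ := ih
    rcases trichotomous_of r a m with h | h | h
    · refine ⟨a, Finset.mem_cons_self _ _, ?_⟩
      intro x hx hxa
      rcases Finset.mem_cons.1 hx with rfl | hx
      · exact absurd rfl hxa
      rcases eq_or_ne x m with rfl | hxm
      · exact h
      · exact _root_.trans_of r h (hmax x hx hxm)
    · exact absurd hm (h ▸ ha)
    · refine ⟨m, Finset.mem_cons.2 (Or.inr hm), ?_⟩
      intro x hx hxm
      rcases Finset.mem_cons.1 hx with rfl | hx
      · exact h
      · exact hmax x hx hxm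

open Classical in
noncomputable def bestOf {α : Type*} [Inhabited α] (r : α → α → Prop) (A : Finset α) : α :=
  if h : ∃ m ∈ A, ∀ x ∈ A, x ≠ m → r m x then h.choose else default

open Classical in
theorem bestOf_spec {α : Type*} [Inhabited α] (r : α → α → Prop) [IsTrichotomous α r]
    [IsTrans α r] (A : Finset α) (hA : A.Nonempty) :
    bestOf r A ∈ A ∧ ∀ x ∈ A, x ≠ bestOf r A → r (bestOf r A) x := by
  have h := exists_top r A hA
  rw [bestOf, dif_pos h]
  exact ⟨h.choose_spec.1, h.choose_spec.2⟩

variable {I S : Type*} [Fintype I] [Fintype S]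

open Classical in
noncomputable def availF (ord : I → ℕ) (q : S → ℕ) (i : I) (μ : I → Option S) :
    Finset (Option S) :=
  Finset.univ.filter fun o => o = none ∨
    ∃ s, o = some s ∧ {j | ord j < ord i ∧ μ j = some s}.ncard < q s

theorem mem_availF {ord : I → ℕ} {q : S → ℕ} {i : I} {μ : I → Option S} {o : Option S} :
    o ∈ availF ord q i μ ↔ (o = none ∨
      ∃ s, o = some s ∧ {j | ord j < ord i ∧ μ j = some s}.ncard < q s) := by
  simp [availF]

theorem availF_congr {ord : I → ℕ} {q : S → ℕ} {i : I} {μ1 μ2 : I → Option S}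
    (h : ∀ j, ord j < ord i → μ1 j = μ2 j) : availF ord q i μ1 = availF ord q i μ2 := by
  ext o
  have hs : ∀ s : S, {j | ord j < ord i ∧ μ1 j = some s}
      = {j | ord j < ord i ∧ μ2 j = some s} := by
    intro s; ext j; exact and_congr_right fun hj => by rw [h j hj]
  rw [mem_availF, mem_availF]
  simp_rw [hs]

noncomputable def sd (ord : I → ℕ) (q : S → ℕ) (pI : StudentPrefs I S) : I → Option S :=
  WellFounded.fix (measure ord).wf (fun i rec =>
    bestOf (pI i) (availF ord q i (fun j => if h : ord j < ord i then rec j h else none)))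

theorem sd_eq (ord : I → ℕ) (q : S → ℕ) (pI : StudentPrefs I S) (i : I) :
    sd ord q pI i = bestOf (pI i) (availF ord q i (sd ord q pI)) := by
  rw [sd, WellFounded.fix_eq]
  congr 1
  apply availF_congr
  intro j hj
  simp only [dif_pos hj]

theorem availF_nonempty {ord : I → ℕ} {q : S → ℕ} {i : I} {μ : I → Option S} :
    (availF ord q i μ).Nonempty :=
  ⟨none, mem_availF.2 (Or.inl rfl)⟩

theorem sd_mem {ord : I → ℕ} {q : S → ℕ} {pI : StudentPrefs I S}
    (hval : ValidStudentPrefs pI) (i : I) :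
    sd ord q pI i ∈ availF ord q i (sd ord q pI) ∧
    ∀ x ∈ availF ord q i (sd ord q pI), x ≠ sd ord q pI i →
      pI i (sd ord q pI i) x := by
  haveI := hval i
  rw [sd_eq]
  exact bestOf_spec (pI i) _ availF_nonempty

theorem sd_agree (ord : I → ℕ) (q : S → ℕ) (pI pI' : StudentPrefs I S) :
    ∀ i, (∀ j, ord j ≤ ord i → pI j = pI' j) → sd ord q pI i = sd ord q pI' i := by
  have H : ∀ n i, ord i < n → (∀ j, ord j ≤ ord i → pI j = pI' j) →
      sd ord q pI i = sd ord q pI' i := by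
    intro n
    induction n with
    | zero => exact fun i hi => absurd hi (Nat.not_lt_zero _)
    | succ n ih =>
      intro i hi h
      rw [sd_eq, sd_eq, h i le_rfl]
      congr 1
      apply availF_congr
      intro j hj
      exact ih j (by omega) fun j' hj' => h j' (le_trans hj' (le_of_lt hj))
  exact fun i => H (ord i + 1) i (Nat.lt_succ_self _)

theorem sd_count_lt {ord : I → ℕ} {q : S → ℕ} {pI : StudentPrefs I S}
    (hval : ValidStudentPrefs pI) {i : I} {s : S} (hs : sd ord q pI i = some s) :
    {j | ord j < ord i ∧ sd ord q pI j = some s}.ncard < q s := by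
  have hmem := (sd_mem (ord := ord) (q := q) hval i).1
  rw [mem_availF] at hmem
  rcases hmem with h | ⟨s', heq, hc⟩
  · rw [hs] at h; exact absurd h (by simp)
  · rw [hs] at heq
    obtain rfl : s = s' := by injection heq
    exact hc

theorem sd_feasible {ord : I → ℕ} (hinj : Function.Injective ord) {q : S → ℕ}
    {pI : StudentPrefs I S} (hval : ValidStudentPrefs pI) :
    Feasible q (sd ord q pI) := by
  intro s
  set cnt : I → ℕ := fun i => {j | ord j < ord i ∧ sd ord q pI j = some s}.ncard with hcnt
  have hmap : ∀ i ∈ {i | sd ord q pI i = some s}, cnt i ∈ (↑(Finset.range (q s)) : Set ℕ) := by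
    intro i hi
    simp only [Finset.coe_range, Set.mem_Iio]
    exact sd_count_lt hval hi
  have hmono : ∀ i ∈ {i | sd ord q pI i = some s}, ∀ i' ∈ {i | sd ord q pI i = some s},
      ord i < ord i' → cnt i < cnt i' := by
    intro i hi i' hi' hlt
    apply Set.ncard_lt_ncard _ (Set.toFinite _)
    constructor
    · intro j hj; exact ⟨lt_trans hj.1 hlt, hj.2⟩
    · intro hsub
      have := hsub ⟨hlt, hi⟩
      exact lt_irrefl _ this.1
  have hinjOn : Set.InjOn cnt {i | sd ord q pI i = some s} := by
    intro i hi i' hi' heq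
    by_contra hne
    rcases lt_or_gt_of_ne (fun h => hne (hinj h)) with h | h
    · exact absurd heq (ne_of_lt (hmono i hi i' hi' h))
    · exact absurd heq.symm (ne_of_lt (hmono i' hi' i hi h))
  calc {i | sd ord q pI i = some s}.ncard ≤ (↑(Finset.range (q s)) : Set ℕ).ncard :=
        Set.ncard_le_ncard_of_injOn cnt hmap hinjOn (Set.toFinite _)
    _ = q s := by rw [Set.ncard_coe_finset, Finset.card_range]

end SD

/-- for any fixed schools' preferences, quotas, and `k`-degenerate
acquaintance graph, there exists a strategyproof mechanism whose output matching is always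
feasible, Pareto efficient, and locally ERF-k. -/
theorem sp_pe_locerf_mechanism_degenerate {I S : Type*} [Fintype I] [Fintype S] [Nonempty I]
    (k : ℕ) (G : SimpleGraph I) (hdeg : Degenerate G k)
    (pS : SchoolPrefs I S) (q : S → ℕ) (hpS : ValidSchoolPrefs pS) :
    ∃ f : StudentPrefs I S → (I → Option S),
      (∀ pI, ValidStudentPrefs pI → Feasible q (f pI)) ∧
      Strategyproof f ∧
      ∀ pI, ValidStudentPrefs pI →
        ParetoEfficient pI q (f pI) ∧ LocERF G pI pS k (f pI) := by
  obtain ⟨ord, hinj, hbound⟩ := hdeg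
  refine ⟨sd ord q, fun pI hval => sd_feasible hinj hval, ?_, ?_⟩
  · -- Strategyproofness
    intro pI hval i pI' hval' hag
    have earlier : ∀ j, ord j < ord i → sd ord q pI j = sd ord q pI' j := by
      intro j hj
      apply sd_agree
      intro j' hj'
      exact (hag j' (fun h => by subst h; omega)).symm
    have havail : availF ord q i (sd ord q pI) = availF ord q i (sd ord q pI') :=
      availF_congr earlier
    have h1 := sd_mem (ord := ord) (q := q) hval i
    have h2 := (sd_mem (ord := ord) (q := q) hval' i).1
    rw [← havail] at h2
    rcases eq_or_ne (sd ord q pI i) (sd ord q pI' i) with h | h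
    · exact Or.inl h
    · exact Or.inr (h1.2 _ h2 (Ne.symm h))
  · intro pI hval
    constructor
    · -- Pareto efficiency
      rintro μ' hfeas ⟨hdom, i0, hi0⟩
      set W := {i | μ' i ≠ sd ord q pI i} with hW
      have hne : W.Nonempty := by
        refine ⟨i0, fun h => ?_⟩
        haveI := hval i0
        rw [h] at hi0
        exact absurd hi0 (irrefl_of (pI i0) _)
      obtain ⟨i, hiW, hmin⟩ := Set.exists_min_image W ord (Set.toFinite _) hne
      have hearly : ∀ j, ord j < ord i → μ' j = sd ord q pI j := by
        intro j hj
        by_contra hj'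
        have := hmin j hj'
        omega
      have hpi : pI i (μ' i) (sd ord q pI i) := (hdom i).resolve_left hiW
      have hmem : μ' i ∈ availF ord q i (sd ord q pI) := by
        rw [mem_availF]
        rcases hμ : μ' i with _ | s
        · exact Or.inl rfl
        · refine Or.inr ⟨s, rfl, ?_⟩
          have hsub : {j | ord j < ord i ∧ sd ord q pI j = some s} ⊂ {j | μ' j = some s} := by
            constructor
            · intro j hj
              exact (hearly j hj.1).trans hj.2
            · intro hsub2
              have h := hsub2 (show i ∈ {j | μ' j = some s} from hμ)
              exact lt_irrefl _ h.1
          calc {j | ord j < ord i ∧ sd ord q pI j = some s}.ncard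
              < {j | μ' j = some s}.ncard := Set.ncard_lt_ncard hsub (Set.toFinite _)
            _ ≤ q s := hfeas s
      have hopt := (sd_mem (ord := ord) (q := q) hval i).2 _ hmem hiW
      haveI := hval i
      exact absurd (trans_of (pI i) hpi hopt) (irrefl_of (pI i) _)
    · -- locally ERF-k
      intro i
      have hsub : {i' | LocalEnvy G pI pS (sd ord q pI) i' i}
          ⊆ {i' | G.Adj i i' ∧ ord i < ord i'} := by
        rintro i' ⟨⟨s, hsi, hpref, -⟩, hadj⟩
        refine ⟨hadj.symm, ?_⟩
        haveI := hval i'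
        have hne : i' ≠ i := by
          rintro rfl
          rw [hsi] at hpref
          exact absurd hpref (irrefl_of (pI i') _)
        rcases lt_or_gt_of_ne (fun h : ord i' = ord i => hne (hinj h)) with hlt | hgt
        · exfalso
          have hmem : (some s : Option S) ∈ availF ord q i' (sd ord q pI) := by
            rw [mem_availF]
            refine Or.inr ⟨s, rfl, lt_of_le_of_lt ?_ (sd_count_lt hval hsi)⟩
            apply Set.ncard_le_ncard _ (Set.toFinite _)
            intro j hj
            exact ⟨lt_trans hj.1 hlt, hj.2⟩
          rcases eq_or_ne (some s : Option S) (sd ord q pI i') with h | h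
          · rw [← h] at hpref
            exact absurd hpref (irrefl_of (pI i') _)
          · exact absurd
              (trans_of (pI i') hpref ((sd_mem (ord := ord) (q := q) hval i').2 _ hmem h))
              (irrefl_of (pI i') _)
        · exact hgt
      exact le_trans (Set.ncard_le_ncard hsub (Set.toFinite _)) (hbound i)
end
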